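/- If G_1 is an induced subgraph of G_2, then s(G_1) ≤ s(G_2). In fact, there is an injective map φ from the minimal separators of G_1 to the minimal separators of G_2 satisfying φ(S) ∩ V(G_1) = S for every minimal separator S of G_1. -/

import Mathlib

open SimpleGraph

variable {V : Type*}

/-- `S` separates `a` from `b` in `G`: every walk from `a` to `b` meets `S`. -/
def Separates (G : SimpleGraph V) (S : Set V) (a b : V) : Prop :=
  ∀ p : G.Walk a b, ∃ v ∈ p.support, v ∈ S

/-- `S` is a minimal `a,b`-separator in `G`. -/
def IsMinSepPair (G : SimpleGraph V) (S : Set V) (a b : V) : Prop :=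
  a ≠ b ∧ ¬ G.Adj a b ∧ a ∉ S ∧ b ∉ S ∧ Separates G S a b ∧
    ∀ T : Set V, T ⊂ S → ¬ Separates G T a b

/-- `S` is a minimal separator in `G`. -/
def IsMinSep (G : SimpleGraph V) (S : Set V) : Prop :=
  ∃ a b, IsMinSepPair G S a b

/-- The number of minimal separators of `G`. -/
noncomputable def numMinSeps (G : SimpleGraph V) : ℕ :=
  Set.ncard {S : Set V | IsMinSep G S}

/-- A connected component `C` of `G - S` is `S`-full if every vertex of `S`
has a neighbor in `C`. -/
def IsFullComponent (G : SimpleGraph V) (S : Set V)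
    (C : (G.induce (Sᶜ : Set V)).ConnectedComponent) : Prop :=
  ∀ v ∈ S, ∃ w : (Sᶜ : Set V),
    (G.induce (Sᶜ : Set V)).connectedComponentMk w = C ∧ G.Adj v ↑w

/-- lift a walk with support in `A` to the induced subgraph on `A`. -/
lemma lift_walk {G : SimpleGraph V} {A : Set V} :
    ∀ {a b : V} (p : G.Walk a b) (hp : ∀ v ∈ p.support, v ∈ A),
    ∃ q : (G.induce A).Walk ⟨a, hp a p.start_mem_support⟩ ⟨b, hp b p.end_mem_support⟩,
      ∀ v ∈ q.support, (↑v : V) ∈ p.support := by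
  intro a b p
  induction p with
  | nil => intro hp; exact ⟨.nil, by simp⟩
  | cons h p ih =>
    intro hp
    have hp' : ∀ v ∈ p.support, v ∈ A := fun v hv => hp v (by simp [hv])
    obtain ⟨q, hq⟩ := ih hp'
    refine ⟨.cons (by simpa using h) q, ?_⟩
    intro v hv
    rw [SimpleGraph.Walk.support_cons, List.mem_cons] at hv
    rcases hv with hv | hv
    · simp [hv]
    · have := hq v hv
      simp [this]

/-- the inclusion homomorphism from an induced subgraph. -/
def induceHom' (G : SimpleGraph V) (A : Set V) : G.induce A →g G where
  toFun := Subtype.val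
  map_rel' := by intro a b h; simpa using h

/-- any separator contains a minimal separator (for the same pair). -/
lemma exists_min_sep (G : SimpleGraph V) [Fintype V] {a b : V} (hab : a ≠ b)
    (hadj : ¬ G.Adj a b) :
    ∀ (S₀ : Set V), a ∉ S₀ → b ∉ S₀ → Separates G S₀ a b →
      ∃ T, T ⊆ S₀ ∧ IsMinSepPair G T a b := by
  have H : ∀ n (S₀ : Set V), S₀.ncard ≤ n → a ∉ S₀ → b ∉ S₀ → Separates G S₀ a b →
      ∃ T, T ⊆ S₀ ∧ IsMinSepPair G T a b := by
    intro n
    induction n with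
    | zero =>
      intro S₀ hcard ha hb hsep
      have : S₀ = ∅ := by
        have := (Set.ncard_eq_zero (Set.toFinite S₀)).mp (Nat.le_zero.mp hcard)
        exact this
      refine ⟨S₀, subset_rfl, hab, hadj, ha, hb, hsep, ?_⟩
      intro T hT
      rw [this] at hT
      exact fun _ => hT.ne (Set.subset_empty_iff.mp hT.subset)
    | succ n ih =>
      intro S₀ hcard ha hb hsep
      by_cases hmin : ∀ T, T ⊂ S₀ → ¬ Separates G T a b
      · exact ⟨S₀, subset_rfl, hab, hadj, ha, hb, hsep, hmin⟩
      · push_neg at hmin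
        obtain ⟨T, hTS, hTsep⟩ := hmin
        have hlt : T.ncard < S₀.ncard := Set.ncard_lt_ncard hTS (Set.toFinite S₀)
        obtain ⟨T', hT', hmin'⟩ := ih T (by omega)
          (fun h => ha (hTS.subset h)) (fun h => hb (hTS.subset h)) hTsep
        exact ⟨T', hT'.trans hTS.subset, hmin'⟩
  intro S₀ ha hb hsep
  exact H S₀.ncard S₀ le_rfl ha hb hsep

/-- key extension lemma. -/
lemma key_ext (G₂ : SimpleGraph V) [Fintype V] (A : Set V) (S : Set A)
    (h : IsMinSep (G₂.induce A) S) :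
    ∃ T, IsMinSep G₂ T ∧ T ∩ A = Subtype.val '' S := by
  obtain ⟨a, b, hab, hadj, haS, hbS, hsep, hmin⟩ := h
  set S₀ : Set V := (Subtype.val '' S) ∪ Aᶜ with hS₀
  have hab' : (↑a : V) ≠ ↑b := fun h => hab (Subtype.ext h)
  have hadj' : ¬ G₂.Adj ↑a ↑b := fun h => hadj (by simpa using h)
  have ha₀ : (↑a : V) ∉ S₀ := by
    rintro (⟨x, hx, hxa⟩ | h)
    · exact haS (by rwa [Subtype.val_injective hxa] at hx)
    · exact h a.2
  have hb₀ : (↑b : V) ∉ S₀ := by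
    rintro (⟨x, hx, hxb⟩ | h)
    · exact hbS (by rwa [Subtype.val_injective hxb] at hx)
    · exact h b.2
  have hsep₀ : Separates G₂ S₀ ↑a ↑b := by
    intro p
    by_cases hpA : ∀ v ∈ p.support, v ∈ A
    · obtain ⟨q, hq⟩ := lift_walk p hpA
      have q' : (G₂.induce A).Walk a b :=
        q.copy (Subtype.ext rfl) (Subtype.ext rfl)
      obtain ⟨x, hx, hxS⟩ := hsep (q.copy (Subtype.ext rfl) (Subtype.ext rfl))
      rw [SimpleGraph.Walk.support_copy] at hx
      exact ⟨↑x, hq x hx, Or.inl ⟨x, hxS, rfl⟩⟩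
    · push_neg at hpA
      obtain ⟨v, hv, hvA⟩ := hpA
      exact ⟨v, hv, Or.inr hvA⟩
  obtain ⟨T, hTS₀, hT⟩ := exists_min_sep G₂ hab' hadj' S₀ ha₀ hb₀ hsep₀
  refine ⟨T, ⟨↑a, ↑b, hT⟩, ?_⟩
  have hsub : T ∩ A ⊆ Subtype.val '' S := by
    rintro x ⟨hxT, hxA⟩
    rcases hTS₀ hxT with h | h
    · exact h
    · exact absurd hxA h
  refine Set.Subset.antisymm hsub ?_
  by_contra hnot
  obtain ⟨y, hyS, hyT⟩ : ∃ y ∈ S, (↑y : V) ∉ T := by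
    by_contra hc
    push_neg at hc
    exact hnot (fun x ⟨s, hs, hsx⟩ => hsx ▸ ⟨hc s hs, s.2⟩)
  set S' : Set A := {x : A | (↑x : V) ∈ T} with hS'
  have hS'S : S' ⊂ S := by
    constructor
    · intro x hx
      obtain ⟨s, hs, hsx⟩ := hsub ⟨hx, x.2⟩
      rwa [← Subtype.val_injective hsx]
    · intro hSS'
      exact hyT (hSS' hyS)
  refine hmin S' hS'S ?_
  intro q
  obtain ⟨v, hv, hvT⟩ := hT.2.2.2.2.1 (q.map (induceHom' G₂ A))
  replace hv : v ∈ (q.map (induceHom' G₂ A)).support := hv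
  rw [SimpleGraph.Walk.support_map, List.mem_map] at hv
  obtain ⟨x, hx, hxv⟩ := hv
  refine ⟨x, hx, ?_⟩
  show (↑x : V) ∈ T
  rw [← hxv] at hvT
  exact hvT

theorem stmt7 (G₂ : SimpleGraph V) [Fintype V] (A : Set V) :
    numMinSeps (G₂.induce A) ≤ numMinSeps G₂ ∧
    ∃ φ : Set A → Set V,
      (∀ S : Set A, IsMinSep (G₂.induce A) S →
        IsMinSep G₂ (φ S) ∧ φ S ∩ A = Subtype.val '' S) ∧
      Set.InjOn φ {S : Set A | IsMinSep (G₂.induce A) S} := by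
  classical
  set φ : Set A → Set V := fun S =>
    if h : IsMinSep (G₂.induce A) S then (key_ext G₂ A S h).choose else ∅ with hφ
  have hspec : ∀ S : Set A, IsMinSep (G₂.induce A) S →
      IsMinSep G₂ (φ S) ∧ φ S ∩ A = Subtype.val '' S := by
    intro S h
    simp only [hφ, dif_pos h]
    exact (key_ext G₂ A S h).choose_spec
  have hinj : Set.InjOn φ {S : Set A | IsMinSep (G₂.induce A) S} := by
    intro S hS S' hS' heq
    have h1 := (hspec S hS).2
    have h2 := (hspec S' hS').2
    rw [heq, h2] at h1
    exact Set.image_injective.mpr Subtype.val_injective h1.symm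
  refine ⟨?_, φ, hspec, hinj⟩
  have himg : φ '' {S : Set A | IsMinSep (G₂.induce A) S} ⊆ {T : Set V | IsMinSep G₂ T} := by
    rintro _ ⟨S, hS, rfl⟩
    exact (hspec S hS).1
  calc numMinSeps (G₂.induce A)
      = (φ '' {S : Set A | IsMinSep (G₂.induce A) S}).ncard :=
        (Set.ncard_image_of_injOn hinj).symm
    _ ≤ numMinSeps G₂ := Set.ncard_le_ncard himg (Set.toFinite _)
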